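/- The product A₁A₂A₃ satisfies tr(A₁A₂A₃) = i√2 and det(A₁A₂A₃) = −1, its eigenvalues are ζ₈ = e^{iπ/4} and ζ₈³, and it has order exactly 8 in GL(2,ℂ) (i.e. (A₁A₂A₃)⁸ = I and (A₁A₂A₃)⁴ ≠ I). The product A₁A₃ satisfies tr(A₁A₃) = −1 and det(A₁A₃) = 1, its eigenvalues are the primitive cube roots of unity ω and conj(ω), and it has order exactly 3 in GL(2,ℂ). -/
import Mathlib


open Matrix

noncomputable section

/-- i√2. -/
def s2 : ℂ := Complex.I * Real.sqrt 2

/-- R₁ = [[1,0,0],[0,1,0],[0,1−i√2,−1]]. -/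
def R₁ : Matrix (Fin 3) (Fin 3) ℂ := !![1, 0, 0; 0, 1, 0; 0, 1 - s2, -1]

/-- R₂ = [[1,0,0],[0,−1+i√2,2],[0,1+i√2,1−i√2]]. -/
def R₂ : Matrix (Fin 3) (Fin 3) ℂ := !![1, 0, 0; 0, -1 + s2, 2; 0, 1 + s2, 1 - s2]

/-- R₃ = [[1,0,0],[(1+i√2)/2,1,−1−i√2],[1,0,−1]]. -/
def R₃ : Matrix (Fin 3) (Fin 3) ℂ := !![1, 0, 0; (1 + s2) / 2, 1, -1 - s2; 1, 0, -1]

/-- The translation matrix T_v for v = (v₁, v₂). -/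
def T (v₁ v₂ : ℂ) : Matrix (Fin 3) (Fin 3) ℂ := !![1, 0, 0; v₁, 1, 0; v₂, 0, 1]

/-- A₁, the linear part of R₁. -/
def A₁ : Matrix (Fin 2) (Fin 2) ℂ := !![1, 0; 1 - s2, -1]

/-- A₂, the linear part of R₂. -/
def A₂ : Matrix (Fin 2) (Fin 2) ℂ := !![-1 + s2, 2; 1 + s2, 1 - s2]

/-- A₃, the linear part of R₃. -/
def A₃ : Matrix (Fin 2) (Fin 2) ℂ := !![1, -1 - s2; 0, -1]

end

open Polynomial

/-- ζ₈ = e^{iπ/4}. -/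
noncomputable def ζ₈ : ℂ := Complex.exp (Real.pi * Complex.I / 4)

/-- ω = (−1+i√3)/2. -/
noncomputable def ω : ℂ := (-1 + Complex.I * Real.sqrt 3) / 2

lemma charpoly_fin_two' {R : Type*} [CommRing R] (M : Matrix (Fin 2) (Fin 2) R) :
    M.charpoly = X ^ 2 - C M.trace * X + C M.det := by
  rw [Matrix.charpoly, det_fin_two, charmatrix_apply_eq, charmatrix_apply_eq,
    charmatrix_apply_ne _ _ _ (by decide), charmatrix_apply_ne _ _ _ (by decide),
    trace_fin_two, det_fin_two]
  simp only [map_add, map_sub, _root_.map_mul]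
  ring

lemma hr2 : (Real.sqrt 2 : ℂ) * (Real.sqrt 2 : ℂ) = 2 := by
  rw [← Complex.ofReal_mul, Real.mul_self_sqrt (by norm_num)]; norm_num

lemma hs2 : s2 * s2 = -2 := by
  unfold s2
  linear_combination ((Real.sqrt 2 : ℂ) * (Real.sqrt 2 : ℂ)) * Complex.I_mul_I - hr2

lemma hzeta : ζ₈ = (Real.sqrt 2 : ℂ) / 2 * (1 + Complex.I) := by
  unfold ζ₈
  rw [show (Real.pi : ℂ) * Complex.I / 4 = (Real.pi / 4 : ℝ) * Complex.I by push_cast; ring,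
    Complex.exp_mul_I, ← Complex.ofReal_cos, ← Complex.ofReal_sin,
    Real.cos_pi_div_four, Real.sin_pi_div_four]
  push_cast
  ring

lemma hzeta2 : ζ₈ ^ 2 = Complex.I := by
  rw [hzeta]
  linear_combination ((1 + 2 * Complex.I + Complex.I * Complex.I) / 4) * hr2
    + (1 / 2 : ℂ) * Complex.I_mul_I

lemma hzsum : ζ₈ + ζ₈ ^ 3 = s2 := by
  have h := hzeta
  have h2 := hzeta2
  unfold s2
  linear_combination ζ₈ * h2 + (1 + Complex.I) * h + ((Real.sqrt 2 : ℂ) / 2) * Complex.I_mul_I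

lemma hzprod : ζ₈ * ζ₈ ^ 3 = -1 := by
  have h := hzeta2
  calc ζ₈ * ζ₈ ^ 3 = (ζ₈ ^ 2) ^ 2 := by ring
    _ = -1 := by rw [h, Complex.I_sq]

lemma hr3 : (Real.sqrt 3 : ℂ) * (Real.sqrt 3 : ℂ) = 3 := by
  rw [← Complex.ofReal_mul, Real.mul_self_sqrt (by norm_num)]; norm_num

lemma hconj : starRingEnd ℂ ω = (-1 - Complex.I * Real.sqrt 3) / 2 := by
  unfold ω
  rw [map_div₀]
  simp [Complex.conj_I, Complex.conj_ofReal, map_ofNat]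
  ring

lemma hwsum : ω + starRingEnd ℂ ω = -1 := by
  rw [hconj]; unfold ω; ring

lemma hwprod : ω * starRingEnd ℂ ω = 1 := by
  rw [hconj]; unfold ω
  linear_combination (-(1:ℂ)/4) * ((Real.sqrt 3 : ℂ) * (Real.sqrt 3 : ℂ)) * Complex.I_mul_I
    + (1/4 : ℂ) * hr3

lemma hM : A₁ * A₂ * A₃ = !![-1 + s2, 1; s2, 1] := by
  have hs := hs2
  ext i j
  fin_cases i <;> fin_cases j <;>
    simp [A₁, A₂, A₃, Matrix.mul_apply, Fin.sum_univ_two] <;>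
    first
      | ring1
      | linear_combination hs
      | linear_combination -hs
      | linear_combination 2 * hs
      | linear_combination -2 * hs
      | linear_combination s2 * hs
      | linear_combination (-s2) * hs
      | linear_combination (2 + s2) * hs
      | linear_combination (-2 - s2) * hs
      | linear_combination (1 + s2) * hs
      | linear_combination (-1 - s2) * hs
      | linear_combination (1 - s2) * hs
      | linear_combination (s2 - 1) * hs

lemma hN : A₁ * A₃ = !![1, -1 - s2; 1 - s2, -2] := by
  have hs := hs2
  ext i j
  fin_cases i <;> fin_cases j <;>
    simp [A₁, A₃, Matrix.mul_apply, Fin.sum_univ_two] <;>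
    first
      | ring1
      | linear_combination hs
      | linear_combination -hs

lemma hM2 : (A₁ * A₂ * A₃) ^ 2 = !![-1 - s2, s2; -2, 1 + s2] := by
  have hs := hs2
  rw [sq, hM]
  ext i j
  fin_cases i <;> fin_cases j <;>
    simp [Matrix.mul_apply, Fin.sum_univ_two] <;>
    first
      | ring1
      | linear_combination hs
      | linear_combination -hs

lemma hM4 : (A₁ * A₂ * A₃) ^ 4 = -1 := by
  have hs := hs2
  rw [show (4:ℕ) = 2 * 2 from rfl, pow_mul, sq, hM2]
  ext i j
  fin_cases i <;> fin_cases j <;>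
    simp [Matrix.mul_apply, Fin.sum_univ_two, Matrix.one_apply] <;>
    first
      | ring1
      | linear_combination hs
      | linear_combination -hs
      | linear_combination 2 * hs
      | linear_combination -2 * hs
      | linear_combination s2 * hs
      | linear_combination (-s2) * hs
      | linear_combination (2 + s2) * hs
      | linear_combination (-2 - s2) * hs
      | linear_combination (1 + s2) * hs
      | linear_combination (-1 - s2) * hs
      | linear_combination (1 - s2) * hs
      | linear_combination (s2 - 1) * hs

lemma hN2 : (A₁ * A₃) ^ 2 = !![-2, 1 + s2; -1 + s2, 1] := by
  have hs := hs2
  rw [sq, hN]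
  ext i j
  fin_cases i <;> fin_cases j <;>
    simp [Matrix.mul_apply, Fin.sum_univ_two] <;>
    first
      | ring1
      | linear_combination hs
      | linear_combination -hs

lemma hN3 : (A₁ * A₃) ^ 3 = 1 := by
  have hs := hs2
  rw [pow_succ, hN2, hN]
  ext i j
  fin_cases i <;> fin_cases j <;>
    simp [Matrix.mul_apply, Fin.sum_univ_two, Matrix.one_apply] <;>
    first
      | ring1
      | linear_combination hs
      | linear_combination -hs
      | linear_combination 2 * hs
      | linear_combination -2 * hs
      | linear_combination s2 * hs
      | linear_combination (-s2) * hs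
      | linear_combination (2 + s2) * hs
      | linear_combination (-2 - s2) * hs
      | linear_combination (1 + s2) * hs
      | linear_combination (-1 - s2) * hs
      | linear_combination (1 - s2) * hs
      | linear_combination (s2 - 1) * hs

lemma s2_im : s2.im = Real.sqrt 2 := by
  simp [s2]

/-- A₁A₂A₃ has trace i√2, determinant −1, eigenvalues ζ₈ and ζ₈³, and
order exactly 8; A₁A₃ has trace −1, determinant 1, eigenvalues ω and conj(ω), and
order exactly 3. -/
theorem stmt_16 :
    (A₁ * A₂ * A₃).trace = s2 ∧
    (A₁ * A₂ * A₃).det = -1 ∧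
    (A₁ * A₂ * A₃).charpoly = (X - C ζ₈) * (X - C (ζ₈ ^ 3)) ∧
    (A₁ * A₂ * A₃) ^ 8 = 1 ∧ (A₁ * A₂ * A₃) ^ 4 ≠ 1 ∧
    (A₁ * A₃).trace = -1 ∧
    (A₁ * A₃).det = 1 ∧
    (A₁ * A₃).charpoly = (X - C ω) * (X - C (starRingEnd ℂ ω)) ∧
    (A₁ * A₃) ^ 3 = 1 ∧ (∀ k : ℕ, 1 ≤ k → k < 3 → (A₁ * A₃) ^ k ≠ 1) := by
  have htrM : (A₁ * A₂ * A₃).trace = s2 := by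
    rw [hM, Matrix.trace_fin_two_of]; ring
  have hdetM : (A₁ * A₂ * A₃).det = -1 := by
    rw [hM, Matrix.det_fin_two_of]; ring
  have htrN : (A₁ * A₃).trace = -1 := by
    rw [hN, Matrix.trace_fin_two_of]; ring
  have hdetN : (A₁ * A₃).det = 1 := by
    have hs := hs2
    rw [hN, Matrix.det_fin_two_of]
    linear_combination -hs
  refine ⟨htrM, hdetM, ?_, ?_, ?_, htrN, hdetN, ?_, hN3, ?_⟩
  · rw [charpoly_fin_two', htrM, hdetM,
      show (X - C ζ₈) * (X - C (ζ₈ ^ 3))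
          = X ^ 2 - C (ζ₈ + ζ₈ ^ 3) * X + C (ζ₈ * ζ₈ ^ 3) by
        rw [map_add, _root_.map_mul]; ring,
      hzsum, hzprod]
  · rw [show (8:ℕ) = 4 * 2 from rfl, pow_mul, hM4]
    simp
  · rw [hM4]
    intro h
    have h00 := congrFun (congrFun h 0) 0
    simp [Matrix.one_apply, Matrix.neg_apply] at h00
    norm_num at h00
  · rw [charpoly_fin_two', htrN, hdetN,
      show (X - C ω) * (X - C (starRingEnd ℂ ω))
          = X ^ 2 - C (ω + starRingEnd ℂ ω) * X + C (ω * starRingEnd ℂ ω) by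
        rw [map_add, _root_.map_mul]; ring,
      hwsum, hwprod]
  · intro k hk1 hk3
    interval_cases k
    · rw [pow_one, hN]
      intro h
      have h11 := congrFun (congrFun h 1) 1
      simp [Matrix.one_apply] at h11
      norm_num at h11
    · rw [hN2]
      intro h
      have h00 := congrFun (congrFun h 0) 0
      simp [Matrix.one_apply] at h00
      norm_num at h00
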